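/- arXiv:1409.3948 — 2 statements merged into one kernel-verified Lean document; each statement's English description precedes it below -/
import Mathlib

section
/- The convolution of two related positive rationals is well-defined: if [a_1, …, a_k] and [b_1, …, b_l] are two expansions of the same positive rational α, and n, m ≥ 1 are integers with [a_1, …, a_k, n] = [b_1, …, b_l, m] (as rational numbers), then [a_1, …, a_k, n+1] = [b_1, …, b_l, m+1]. -/
namespace ResolutionGraph

/-- The value of the continued fraction `[a₁, …, aₙ] = a₁ + 1/[a₂, …, aₙ]`. -/
def cfVal : List ℕ → ℚ
  | [] => 0
  | [a] => (a : ℚ)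
  | a :: b :: rest => (a : ℚ) + 1 / cfVal (b :: rest)

/-- `L = (a₁, …, aₙ)` is a continued fraction expansion of `q`:
`n ≥ 1`, `a₁ ≥ 0`, `a₂, …, aₙ ≥ 1` and `[a₁, …, aₙ] = q`. -/
def IsExpansion (L : List ℕ) (q : ℚ) : Prop :=
  L ≠ [] ∧ (∀ x ∈ L.tail, 1 ≤ x) ∧ cfVal L = q

/-- `q` has length `m`, i.e. some expansion `(a₁, …, aₙ)` of `q` satisfies `a₁ + ⋯ + aₙ = m`. -/
def HasLen (q : ℚ) (m : ℕ) : Prop :=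
  ∃ L : List ℕ, IsExpansion L q ∧ L.sum = m

/-- `α ∼ β` : one of them has an expansion `[a₁, …, a_k]` and the other equals
`[a₁, …, a_k, n]` for some integer `n ≥ 1`. -/
def Related (α β : ℚ) : Prop :=
  (∃ (L : List ℕ) (n : ℕ), 1 ≤ n ∧ IsExpansion L α ∧ cfVal (L ++ [n]) = β) ∨
  (∃ (L : List ℕ) (n : ℕ), 1 ≤ n ∧ IsExpansion L β ∧ cfVal (L ++ [n]) = α)

/-- `γ` is the value of the convolution `α ∗ β`, computed from a witness of `α ∼ β`:
for an expansion `[a₁, …, a_k]` of one of them with the other equal to `[a₁, …, a_k, n]`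
(`n ≥ 1` an integer), `γ = [a₁, …, a_k, n + 1]`. -/
def ConvWitness (α β γ : ℚ) : Prop :=
  ∃ (L : List ℕ) (n : ℕ), 1 ≤ n ∧
    ((IsExpansion L α ∧ cfVal (L ++ [n]) = β) ∨ (IsExpansion L β ∧ cfVal (L ++ [n]) = α)) ∧
    cfVal (L ++ [n + 1]) = γ

/-- `α ≺ β` : `β` has an expansion `[a₁, …, a_k]` and `α = [a₁, …, a_ℓ, b]` for some
`0 ≤ ℓ ≤ k − 1` and `1 ≤ b ≤ a_{ℓ+1}`. -/
def Precedes (α β : ℚ) : Prop :=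
  ∃ L : List ℕ, IsExpansion L β ∧ ∃ ℓ : ℕ, ∃ h : ℓ < L.length, ∃ b : ℕ,
    1 ≤ b ∧ b ≤ L.get ⟨ℓ, h⟩ ∧ cfVal (L.take ℓ ++ [b]) = α

/-- `α` immediately precedes `β` : `α ≺ β` and `|β| = |α| + 1`. -/
def ImmediatelyPrecedes (α β : ℚ) : Prop :=
  Precedes α β ∧ ∃ a : ℕ, HasLen α a ∧ HasLen β (a + 1)

lemma one_le_cfVal : ∀ L : List ℕ, L ≠ [] → (∀ x ∈ L, 1 ≤ x) → 1 ≤ cfVal L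
  | [], h, _ => absurd rfl h
  | [a], _, h1 => by
    have := h1 a (by simp)
    simp only [cfVal]
    exact_mod_cast this
  | a :: b :: rest, _, h1 => by
    have ih := one_le_cfVal (b :: rest) (by simp) (fun x hx => h1 x (by simp [hx]))
    have ha : (1:ℚ) ≤ a := by exact_mod_cast h1 a (by simp)
    have hpos : 0 < cfVal (b :: rest) := lt_of_lt_of_le one_pos ih
    have : 0 ≤ 1 / cfVal (b :: rest) := by positivity
    simp only [cfVal]
    linarith

lemma convergents : ∀ L : List ℕ, L ≠ [] → (∀ x ∈ L.tail, 1 ≤ x) →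
    ∃ p q p' q' : ℕ, 1 ≤ q ∧
      ((p : ℤ) * q' - p' * q = 1 ∨ (p : ℤ) * q' - p' * q = -1) ∧
      cfVal L = (p : ℚ) / q ∧
      ∀ n : ℕ, 1 ≤ n → cfVal (L ++ [n]) = ((n * p + p' : ℕ) : ℚ) / ((n * q + q' : ℕ) : ℚ)
  | [], h, _ => absurd rfl h
  | [a], _, _ => by
    refine ⟨a, 1, 1, 0, le_refl 1, Or.inr (by push_cast; ring), by simp [cfVal], ?_⟩
    intro n hn
    have hn0 : (n:ℚ) ≠ 0 := by positivity
    show (a : ℚ) + 1 / (n : ℚ) = _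
    push_cast
    field_simp
    ring
  | a :: b :: rest, _, ht => by
    have htail : ∀ x ∈ b :: rest, 1 ≤ x := fun x hx => ht x hx
    obtain ⟨p, q, p', q', hq, hdet, hval, happ⟩ :=
      convergents (b :: rest) (by simp) (fun x hx => htail x (List.mem_of_mem_tail hx))
    have hone : 1 ≤ cfVal (b :: rest) := one_le_cfVal _ (by simp) htail
    have hqQ : (0:ℚ) < q := by exact_mod_cast hq
    have hpq : (q:ℚ) ≤ p := by
      rw [hval, le_div_iff₀ hqQ, one_mul] at hone; exact hone
    have hp : 1 ≤ p := by
      have h1 : (1:ℚ) ≤ (p:ℚ) := le_trans (by exact_mod_cast hq) hpq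
      exact_mod_cast h1
    have hpQ : (0:ℚ) < p := by exact_mod_cast hp
    refine ⟨a * p + q, p, a * p' + q', p', hp, ?_, ?_, ?_⟩
    · push_cast
      rcases hdet with h1 | h1
      · exact Or.inr (by linarith [h1, (by ring : ((a:ℤ)*p+q)*p' - ((a:ℤ)*p'+q')*p = -(p*q'-p'*q))])
      · exact Or.inl (by linarith [h1, (by ring : ((a:ℤ)*p+q)*p' - ((a:ℤ)*p'+q')*p = -(p*q'-p'*q))])
    · show (a : ℚ) + 1 / cfVal (b :: rest) = _
      rw [hval]
      push_cast
      field_simp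
    · intro n hn
      have hval2 := happ n hn
      have heq : cfVal ((a :: b :: rest) ++ [n]) = (a : ℚ) + 1 / cfVal ((b :: rest) ++ [n]) := rfl
      have h1 : 1 ≤ n * p := by have := Nat.mul_le_mul hn hp; simpa using this
      have h2 : 1 ≤ n * q := by have := Nat.mul_le_mul hn hq; simpa using this
      have hA : ((n:ℚ) * p + p') ≠ 0 := by
        have hx : (0:ℚ) < ((n * p + p' : ℕ) : ℚ) := by
          exact_mod_cast Nat.lt_of_lt_of_le Nat.zero_lt_one (by omega)
        push_cast at hx; linarith
      have hB : ((n:ℚ) * q + q') ≠ 0 := by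
        have hx : (0:ℚ) < ((n * q + q' : ℕ) : ℚ) := by
          exact_mod_cast Nat.lt_of_lt_of_le Nat.zero_lt_one (by omega)
        push_cast at hx; linarith
      rw [heq, hval2]
      push_cast
      rw [one_div_div]
      field_simp
      ring

lemma nat_coprime_of_int (a b : ℕ) (u v : ℤ) (h : u * a + v * b = 1) : Nat.Coprime a b :=
  Nat.isCoprime_iff_coprime.mp ⟨u, v, h⟩

lemma mediant (L : List ℕ) (α : ℚ) (n : ℕ) (hn : 1 ≤ n) (hL : IsExpansion L α) :
    cfVal (L ++ [n + 1]) =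
      ((α.num + (cfVal (L ++ [n])).num : ℤ) : ℚ) /
        (((α.den + (cfVal (L ++ [n])).den : ℕ) : ℤ) : ℚ) := by
  obtain ⟨hne, ht, hval⟩ := hL
  obtain ⟨p, q, p', q', hq, hdet, hv, happ⟩ := convergents L hne ht
  have hq0 : (0:ℤ) < (q:ℤ) := by exact_mod_cast hq
  have hcpq : Nat.Coprime p q := by
    rcases hdet with h1 | h1
    · exact nat_coprime_of_int p q q' (-p') (by push_cast; linarith)
    · exact nat_coprime_of_int p q (-q') p' (by push_cast; linarith)
  have hα' : α = ((p:ℤ):ℚ) / ((q:ℤ):ℚ) := by rw [← hval, hv]; push_cast; ring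
  have hαnum : α.num = (p:ℤ) := by
    rw [hα']; exact Rat.num_div_eq_of_coprime hq0 (by simpa using hcpq)
  have hαden : (α.den : ℤ) = (q:ℤ) := by
    rw [hα']; exact Rat.den_div_eq_of_coprime hq0 (by simpa using hcpq)
  obtain ⟨A, hA⟩ : ∃ A, A = n * p + p' := ⟨_, rfl⟩
  obtain ⟨B, hB⟩ : ∃ B, B = n * q + q' := ⟨_, rfl⟩
  have hB1 : 1 ≤ B := by
    rw [hB]; have := Nat.mul_le_mul hn hq; simp at this; omega
  have hB0 : (0:ℤ) < (B:ℤ) := by exact_mod_cast hB1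
  have hcAB : Nat.Coprime A B := by
    rcases hdet with h1 | h1
    · refine nat_coprime_of_int A B (-(q:ℤ)) (p:ℤ) ?_
      have hr : (-(q:ℤ)) * (n*p+p') + (p:ℤ) * (n*q+q') = -(p'*q) + p*q' := by ring
      rw [hA, hB]; push_cast; linarith
    · refine nat_coprime_of_int A B (q:ℤ) (-(p:ℤ)) ?_
      have hr : ((q:ℤ)) * (n*p+p') + (-(p:ℤ)) * (n*q+q') = p'*q - p*q' := by ring
      rw [hA, hB]; push_cast; linarith
  have hβ' : cfVal (L ++ [n]) = ((A:ℤ):ℚ) / ((B:ℤ):ℚ) := by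
    rw [happ n hn, hA, hB]; push_cast; ring
  have hβnum : (cfVal (L ++ [n])).num = (A:ℤ) := by
    rw [hβ']; exact Rat.num_div_eq_of_coprime hB0 (by simpa using hcAB)
  have hβden : ((cfVal (L ++ [n])).den : ℤ) = (B:ℤ) := by
    rw [hβ']; exact Rat.den_div_eq_of_coprime hB0 (by simpa using hcAB)
  rw [happ (n+1) (by omega)]
  subst hA
  subst hB
  push_cast [hαnum, hαden, hβnum, hβden]
  ring

/-- The convolution of two related positive rationals is well defined:
if `[a₁, …, a_k]` and `[b₁, …, b_l]` are two expansions of the same positive rational `α`, and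
`n, m ≥ 1` are integers with `[a₁, …, a_k, n] = [b₁, …, b_l, m]`, then
`[a₁, …, a_k, n+1] = [b₁, …, b_l, m+1]`. -/
theorem conv_well_defined (α : ℚ) (hα : 0 < α) (L M : List ℕ) (n m : ℕ)
    (hn : 1 ≤ n) (hm : 1 ≤ m) (hL : IsExpansion L α) (hM : IsExpansion M α)
    (h : cfVal (L ++ [n]) = cfVal (M ++ [m])) :
    cfVal (L ++ [n + 1]) = cfVal (M ++ [m + 1]) := by
  rw [mediant L α n hn hL, mediant M α m hm hM, h]

end ResolutionGraph
end

section
/- For every positive rational β, the set of predecessors of β is totally ordered by ≺: if α ≺ β and α′ ≺ β, then α ≺ α′ or α′ ≺ α. -/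
namespace ResolutionGraph

/-! ### Auxiliary lemmas -/

lemma cfVal_cons (a : ℕ) (l : List ℕ) (hl : l ≠ []) :
    cfVal (a :: l) = (a : ℚ) + 1 / cfVal l := by
  cases l with
  | nil => simp at hl
  | cons b r => rfl

lemma one_le_cfVal_s17 (l : List ℕ) (hne : l ≠ []) (h : ∀ x ∈ l, 1 ≤ x) : 1 ≤ cfVal l := by
  induction l with
  | nil => simp at hne
  | cons a r ih =>
    rcases eq_or_ne r [] with rfl | hr
    · have ha := h a (by simp)
      simp only [cfVal]
      exact_mod_cast ha
    · rw [cfVal_cons a r hr]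
      have h1 : 1 ≤ cfVal r := ih hr (fun x hx => h x (by simp [hx]))
      have ha : (1 : ℚ) ≤ a := by exact_mod_cast h a (by simp)
      have hpos : (0:ℚ) < cfVal r := lt_of_lt_of_le one_pos h1
      have : 0 ≤ 1 / cfVal r := by positivity
      linarith

/-- `L` is a *normalized* expansion list: a single entry, or the last entry is `≥ 2`. -/
def NormP (L : List ℕ) : Prop :=
  L.length = 1 ∨ ∃ x, L.getLast? = some x ∧ 2 ≤ x

lemma one_lt_cfVal (l : List ℕ) (h : ∀ x ∈ l, 1 ≤ x)
    (hlast : ∃ x, l.getLast? = some x ∧ 2 ≤ x) : 1 < cfVal l := by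
  obtain ⟨x, hx, hx2⟩ := hlast
  match l with
  | [] => simp at hx
  | [a] =>
    simp only [List.getLast?_singleton, Option.some.injEq] at hx
    subst hx
    simp only [cfVal]
    exact_mod_cast lt_of_lt_of_le one_lt_two hx2
  | a :: b :: r =>
    rw [cfVal_cons a (b :: r) (by simp)]
    have h1 : 1 ≤ cfVal (b :: r) :=
      one_le_cfVal_s17 _ (by simp) (fun y hy => h y (by simp [List.mem_cons] at hy ⊢; tauto))
    have hpos : (0:ℚ) < cfVal (b :: r) := lt_of_lt_of_le one_pos h1
    have ha : (1 : ℚ) ≤ a := by exact_mod_cast h a (by simp)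
    have : 0 < 1 / cfVal (b :: r) := by positivity
    linarith

/-- Uniqueness of normalized expansions. -/
lemma cf_uniq : ∀ n (L M : List ℕ), L.length ≤ n → L ≠ [] → M ≠ [] →
    (∀ x ∈ L.tail, 1 ≤ x) → (∀ x ∈ M.tail, 1 ≤ x) → NormP L → NormP M →
    cfVal L = cfVal M → L = M := by
  intro n
  induction n with
  | zero => intro L M hlen hL; interval_cases h : L.length <;> simp_all
  | succ n ih =>
    intro L M hlen hL hM htL htM hnL hnM hval
    match L, M with
    | [a], [a'] =>
      simp only [cfVal] at hval
      have : a = a' := by exact_mod_cast hval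
      simp [this]
    | [a], a' :: b' :: r' =>
      exfalso
      have hlast' : ∃ x, (b' :: r').getLast? = some x ∧ 2 ≤ x := by
        rcases hnM with h1 | ⟨x, hx, hx2⟩
        · simp at h1
        · exact ⟨x, by rwa [List.getLast?_cons_cons] at hx, hx2⟩
      have ht' : 1 < cfVal (b' :: r') := one_lt_cfVal _ (by simpa using htM) hlast'
      rw [cfVal_cons a' (b' :: r') (by simp)] at hval
      simp only [cfVal] at hval
      have h1 : 0 < 1 / cfVal (b' :: r') := by positivity
      have h2 : 1 / cfVal (b' :: r') < 1 := by
        rw [div_lt_one (by linarith)]; linarith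
      have hq1 : (a' : ℚ) < a := by linarith
      have hq2 : (a : ℚ) < a' + 1 := by linarith
      have : a' < a := by exact_mod_cast hq1
      have : a < a' + 1 := by exact_mod_cast hq2
      omega
    | a :: b :: r, [a'] =>
      exfalso
      have hlast' : ∃ x, (b :: r).getLast? = some x ∧ 2 ≤ x := by
        rcases hnL with h1 | ⟨x, hx, hx2⟩
        · simp at h1
        · exact ⟨x, by rwa [List.getLast?_cons_cons] at hx, hx2⟩
      have ht' : 1 < cfVal (b :: r) := one_lt_cfVal _ (by simpa using htL) hlast'
      rw [cfVal_cons a (b :: r) (by simp)] at hval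
      simp only [cfVal] at hval
      have h1 : 0 < 1 / cfVal (b :: r) := by positivity
      have h2 : 1 / cfVal (b :: r) < 1 := by
        rw [div_lt_one (by linarith)]; linarith
      have hq1 : (a : ℚ) < a' := by linarith
      have hq2 : (a' : ℚ) < a + 1 := by linarith
      have : a < a' := by exact_mod_cast hq1
      have : a' < a + 1 := by exact_mod_cast hq2
      omega
    | a :: b :: r, a' :: b' :: r' =>
      have hlastL : ∃ x, (b :: r).getLast? = some x ∧ 2 ≤ x := by
        rcases hnL with h1 | ⟨x, hx, hx2⟩
        · simp at h1
        · exact ⟨x, by rwa [List.getLast?_cons_cons] at hx, hx2⟩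
      have hlastM : ∃ x, (b' :: r').getLast? = some x ∧ 2 ≤ x := by
        rcases hnM with h1 | ⟨x, hx, hx2⟩
        · simp at h1
        · exact ⟨x, by rwa [List.getLast?_cons_cons] at hx, hx2⟩
      have htLt : 1 < cfVal (b :: r) := one_lt_cfVal _ (by simpa using htL) hlastL
      have htMt : 1 < cfVal (b' :: r') := one_lt_cfVal _ (by simpa using htM) hlastM
      rw [cfVal_cons a (b :: r) (by simp), cfVal_cons a' (b' :: r') (by simp)] at hval
      have h1 : 0 < 1 / cfVal (b :: r) := by positivity
      have h2 : 1 / cfVal (b :: r) < 1 := by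
        rw [div_lt_one (by linarith)]; linarith
      have h1' : 0 < 1 / cfVal (b' :: r') := by positivity
      have h2' : 1 / cfVal (b' :: r') < 1 := by
        rw [div_lt_one (by linarith)]; linarith
      have haa : a = a' := by
        have hq1 : (a : ℚ) < a' + 1 := by linarith
        have hq2 : (a' : ℚ) < a + 1 := by linarith
        have : a < a' + 1 := by exact_mod_cast hq1
        have : a' < a + 1 := by exact_mod_cast hq2
        omega
      subst haa
      have hinv : 1 / cfVal (b :: r) = 1 / cfVal (b' :: r') := by linarith
      have hteq : cfVal (b :: r) = cfVal (b' :: r') := by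
        field_simp at hinv
        linarith
      have htails : b :: r = b' :: r' := by
        apply ih (b :: r) (b' :: r') (by simp at hlen ⊢; omega) (by simp) (by simp)
        · intro x hx; exact htL x (by simp at hx ⊢; tauto)
        · intro x hx; exact htM x (by simp at hx ⊢; tauto)
        · exact Or.inr hlastL
        · exact Or.inr hlastM
        · exact hteq
      rw [htails]

lemma cfVal_merge (A : List ℕ) (x : ℕ) :
    cfVal (A ++ [x, 1]) = cfVal (A ++ [x + 1]) := by
  induction A with
  | nil =>
    show cfVal [x, 1] = cfVal [x + 1]
    simp only [cfVal]
    push_cast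
    norm_num
  | cons a A ih =>
    rw [List.cons_append, List.cons_append, cfVal_cons a _ (by simp),
      cfVal_cons a _ (by simp), ih]

/-- Any predecessor witness can be transported to a normalized expansion. -/
lemma norm_pred : ∀ n (L : List ℕ) (q α : ℚ), L.length ≤ n → IsExpansion L q →
    (∃ ℓ, ∃ h : ℓ < L.length, ∃ b, 1 ≤ b ∧ b ≤ L.get ⟨ℓ, h⟩ ∧ cfVal (L.take ℓ ++ [b]) = α) →
    ∃ N, IsExpansion N q ∧ NormP N ∧
      ∃ ℓ, ∃ h : ℓ < N.length, ∃ b, 1 ≤ b ∧ b ≤ N.get ⟨ℓ, h⟩ ∧ cfVal (N.take ℓ ++ [b]) = α := by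
  intro n
  induction n with
  | zero =>
    intro L q α hlen hexp _
    exact absurd (List.length_eq_zero_iff.mp (Nat.le_zero.mp hlen)) hexp.1
  | succ n ih =>
    intro L q α hlen hexp hpred
    by_cases hnorm : NormP L
    · exact ⟨L, hexp, hnorm, hpred⟩
    obtain ⟨hLne, htail, hcf⟩ := hexp
    rw [NormP] at hnorm
    push_neg at hnorm
    obtain ⟨hlen1, hlast⟩ := hnorm
    have hlenge : 2 ≤ L.length := by
      have := List.length_pos_iff.mpr hLne
      omega
    -- decompose `L = B ++ [x, 1]`
    obtain ⟨B, x, rfl⟩ : ∃ B x, L = B ++ [x, 1] := by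
      have hLeq : L.dropLast ++ [L.getLast hLne] = L := List.dropLast_append_getLast hLne
      have hAne : L.dropLast ≠ [] := by
        intro h0
        have := List.length_dropLast (xs := L)
        rw [h0] at this
        simp at this
        omega
      have hBeq : L.dropLast.dropLast ++ [L.dropLast.getLast hAne] = L.dropLast :=
        List.dropLast_append_getLast hAne
      have hc1 : L.getLast hLne = 1 := by
        have hcmem : L.getLast hLne ∈ L.tail := by
          conv_lhs => rw [← hLeq]
          rw [List.tail_append_of_ne_nil hAne]
          simp
        have := htail _ hcmem
        have := hlast _ (List.getLast?_eq_getLast hLne)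
        omega
      refine ⟨L.dropLast.dropLast, L.dropLast.getLast hAne, ?_⟩
      conv_lhs => rw [← hLeq, ← hBeq, hc1]
      simp
    have hlenL : (B ++ [x, 1]).length = B.length + 2 := by simp
    have htail2 : ∀ y ∈ (B ++ [x + 1]).tail, 1 ≤ y := by
      intro y hy
      match B, hy with
      | [], hy => simp at hy
      | hb :: B', hy =>
        rw [List.cons_append, List.tail_cons] at hy
        rw [List.mem_append] at hy
        rcases hy with hy | hy
        · apply htail
          rw [List.cons_append, List.tail_cons]
          simp [hy]
        · simp at hy; omega
    have hcf2 : cfVal (B ++ [x + 1]) = q := by rw [← cfVal_merge, hcf]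
    have hexp2 : IsExpansion (B ++ [x + 1]) q := ⟨by simp, htail2, hcf2⟩
    -- transfer the predecessor witness
    obtain ⟨ℓ, hℓ, b, hb1, hble, hbval⟩ := hpred
    rw [hlenL] at hℓ
    have hpred2 : ∃ ℓ, ∃ h : ℓ < (B ++ [x + 1]).length, ∃ b,
        1 ≤ b ∧ b ≤ (B ++ [x + 1]).get ⟨ℓ, h⟩ ∧ cfVal ((B ++ [x + 1]).take ℓ ++ [b]) = α := by
      simp only [List.get_eq_getElem] at hble ⊢
      have hlenL2 : (B ++ [x + 1]).length = B.length + 1 := by simp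
      rcases lt_trichotomy ℓ B.length with hcase | hcase | hcase
      · refine ⟨ℓ, by simp; omega, b, hb1, ?_, ?_⟩
        · have e1 : (B ++ [x, 1])[ℓ]'(by simp; omega) = B[ℓ]'(by omega) :=
            List.getElem_append_left hcase
          have e2 : (B ++ [x + 1])[ℓ]'(by simp; omega) = B[ℓ]'(by omega) :=
            List.getElem_append_left hcase
          rw [e2, ← e1]
          exact hble
        · have e3 : (B ++ [x + 1]).take ℓ = (B ++ [x, 1]).take ℓ := by
            rw [List.take_append, List.take_append]
            have : ℓ - B.length = 0 := by omega
            simp [this]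
          rw [e3]; exact hbval
      · subst hcase
        refine ⟨B.length, by simp, b, hb1, ?_, ?_⟩
        · have e1 : (B ++ [x, 1])[B.length]'(by simp) = x := by
            rw [List.getElem_append_right (le_refl _)]
            simp
          have e2 : (B ++ [x + 1])[B.length]'(by simp) = x + 1 := by
            rw [List.getElem_append_right (le_refl _)]
            simp
          rw [e2]
          rw [e1] at hble
          omega
        · have e3 : (B ++ [x + 1]).take B.length = (B ++ [x, 1]).take B.length := by
            rw [List.take_append, List.take_append]
            simp
          rw [e3]; exact hbval
      · have hℓeq : ℓ = B.length + 1 := by omega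
        subst hℓeq
        have e1 : (B ++ [x, 1])[B.length + 1]'(by simp) = 1 := by
          rw [List.getElem_append_right (by omega)]
          simp
        have hbeq : b = 1 := by rw [e1] at hble; omega
        subst hbeq
        refine ⟨B.length, by simp, x + 1, by omega, ?_, ?_⟩
        · have e2 : (B ++ [x + 1])[B.length]'(by simp) = x + 1 := by
            rw [List.getElem_append_right (le_refl _)]
            simp
          rw [e2]
        · have e4 : (B ++ [x, 1]).take (B.length + 1) = B ++ [x] := by
            rw [List.take_append]
            simp
          have e5 : (B ++ [x + 1]).take B.length = B := by
            rw [List.take_append]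
            simp
          rw [e5]
          rw [e4] at hbval
          rw [← hbval, List.append_assoc]
          exact (cfVal_merge B x).symm
    exact ih (B ++ [x + 1]) q α (by simp at hlen ⊢; omega) hexp2 hpred2


/-- Comparison of two predecessor witnesses on the same expansion list. -/
lemma pred_of_lex (N : List ℕ) (β α α' : ℚ) (hN : IsExpansion N β)
    (ℓ1 ℓ2 b1 b2 : ℕ) (h1 : ℓ1 < N.length) (h2 : ℓ2 < N.length)
    (hb1 : 1 ≤ b1) (hb2 : 1 ≤ b2)
    (hle1 : b1 ≤ N.get ⟨ℓ1, h1⟩) (hle2 : b2 ≤ N.get ⟨ℓ2, h2⟩)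
    (hv1 : cfVal (N.take ℓ1 ++ [b1]) = α) (hv2 : cfVal (N.take ℓ2 ++ [b2]) = α')
    (hlex : ℓ1 < ℓ2 ∨ (ℓ1 = ℓ2 ∧ b1 ≤ b2)) : Precedes α α' := by
  obtain ⟨hNne, htail, hcf⟩ := hN
  have hPlen : (N.take ℓ2).length = ℓ2 := by
    rw [List.length_take]; omega
  have hMlen : (N.take ℓ2 ++ [b2]).length = ℓ2 + 1 := by simp [hPlen]
  have hMtail : ∀ y ∈ (N.take ℓ2 ++ [b2]).tail, 1 ≤ y := by
    intro y hy
    match hP : N.take ℓ2, hy with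
    | [], hy => simp at hy
    | p :: P', hy =>
      rw [List.cons_append, List.tail_cons, List.mem_append] at hy
      rcases hy with hy | hy
      · apply htail
        obtain ⟨t, ht⟩ := (List.take_prefix ℓ2 N)
        rw [hP] at ht
        have : N.tail = P' ++ t := by rw [← ht]; rfl
        rw [this, List.mem_append]
        exact Or.inl hy
      · simp at hy; omega
  have hMexp : IsExpansion (N.take ℓ2 ++ [b2]) α' := ⟨by simp, hMtail, hv2⟩
  refine ⟨N.take ℓ2 ++ [b2], hMexp, ℓ1, ?_, b1, hb1, ?_, ?_⟩
  · rw [hMlen]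
    rcases hlex with h | ⟨h, _⟩ <;> omega
  · simp only [List.get_eq_getElem] at hle1 hle2 ⊢
    rcases hlex with hlt | ⟨heq, hble⟩
    · have e1 : (N.take ℓ2 ++ [b2])[ℓ1]'(by rw [hMlen]; omega) = N[ℓ1] := by
        rw [List.getElem_append_left (by rw [hPlen]; omega)]
        exact List.getElem_take ..
      rw [e1]; exact hle1
    · subst heq
      have hPlen1 : (N.take ℓ1).length = ℓ1 := by rw [List.length_take]; omega
      have e1 : (N.take ℓ1 ++ [b2])[ℓ1]'(by simp [hPlen1]) = b2 := by
        rw [List.getElem_append_right (by rw [hPlen1])]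
        simp [hPlen1]
      rw [e1]; exact hble
  · have hl12 : ℓ1 ≤ ℓ2 := by rcases hlex with h | ⟨h, _⟩ <;> omega
    have e2 : (N.take ℓ2 ++ [b2]).take ℓ1 = N.take ℓ1 := by
      rw [List.take_append]
      have : ℓ1 - (N.take ℓ2).length = 0 := by rw [hPlen]; omega
      rw [this, List.take_take]
      simp [min_eq_left hl12]
    rw [e2]; exact hv1

/-- For every positive rational `β`, the set of predecessors of `β` is
totally ordered by `≺` : if `α ≺ β` and `α' ≺ β`, then `α ≺ α'` or `α' ≺ α`. -/
theorem predecessors_totally_ordered (β α α' : ℚ) (hβ : 0 < β) (hα : 0 < α) (hα' : 0 < α')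
    (h : Precedes α β) (h' : Precedes α' β) :
    Precedes α α' ∨ Precedes α' α := by
  obtain ⟨L, hLexp, hLpred⟩ := h
  obtain ⟨L', hLexp', hLpred'⟩ := h'
  obtain ⟨N, hNexp, hNnorm, ℓ1, hℓ1, b1, hb1, hle1, hv1⟩ :=
    norm_pred L.length L β α le_rfl hLexp hLpred
  obtain ⟨N', hNexp', hNnorm', ℓ2, hℓ2, b2, hb2, hle2, hv2⟩ :=
    norm_pred L'.length L' β α' le_rfl hLexp' hLpred'
  have hNN : N = N' := by
    apply cf_uniq N.length N N' le_rfl hNexp.1 hNexp'.1 hNexp.2.1 hNexp'.2.1 hNnorm hNnorm'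
    rw [hNexp.2.2, hNexp'.2.2]
  subst hNN
  rcases lt_trichotomy ℓ1 ℓ2 with hc | hc | hc
  · exact Or.inl (pred_of_lex N β α α' hNexp ℓ1 ℓ2 b1 b2 hℓ1 hℓ2 hb1 hb2 hle1 hle2 hv1 hv2
      (Or.inl hc))
  · rcases le_total b1 b2 with hb | hb
    · exact Or.inl (pred_of_lex N β α α' hNexp ℓ1 ℓ2 b1 b2 hℓ1 hℓ2 hb1 hb2 hle1 hle2 hv1 hv2
        (Or.inr ⟨hc, hb⟩))
    · exact Or.inr (pred_of_lex N β α' α hNexp ℓ2 ℓ1 b2 b1 hℓ2 hℓ1 hb2 hb1 hle2 hle1 hv2 hv1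
        (Or.inr ⟨hc.symm, hb⟩))
  · exact Or.inr (pred_of_lex N β α' α hNexp ℓ2 ℓ1 b2 b1 hℓ2 hℓ1 hb2 hb1 hle2 hle1 hv2 hv1
      (Or.inl hc))

end ResolutionGraph
end
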